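/- arXiv:1606.07197 — 2 statements merged into one kernel-verified Lean document; each statement's English description precedes it below -/
import Mathlib

section
/- For 0 < P_out < 1 with (1 − P_out)² ≠ 1/2, the solution P_out^NC = (√((1 − ε)² + P_out(2ε − 1)) − (1 − ε))/(2ε − 1), where ε = (1 − P_out)², satisfies 0 < P_out^NC < 1. -/
open Real

/-!
Rationalizing the numerator gives `P_out^NC = P_out / (√D + (1 - ε))` with
`D = (1 - ε)² + P_out (2ε - 1)`, and `D - (P_out - (1 - ε))² = P_out (1 - P_out) > 0` gives
`√D + (1 - ε) > P_out > 0`.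
-/

theorem div_eq_div_add_of_sq_eq {K : Type*} [Field K] {a b c s : K} (ha : a ≠ 0)
    (hsb : s + b ≠ 0) (hs : s ^ 2 = b ^ 2 + a * c) : (s - b) / a = c / (s + b) := by
  rw [div_eq_div_iff ha hsb]
  linear_combination hs

theorem sub_one_sub_sq_lt {P : ℝ} (hP0 : 0 < P) (hP1 : P < 1) (ε : ℝ) :
    (P - (1 - ε)) ^ 2 < (1 - ε) ^ 2 + P * (2 * ε - 1) := by
  linear_combination mul_pos hP0 (sub_pos.2 hP1)

theorem nncc_outage_in_unit_interval_general (P_out ε : ℝ) (hP1 : 0 < P_out)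
    (hP2 : P_out < 1) (hεhalf : ε ≠ 1 / 2) :
    0 < (Real.sqrt ((1 - ε) ^ 2 + P_out * (2 * ε - 1)) - (1 - ε)) / (2 * ε - 1) ∧
    (Real.sqrt ((1 - ε) ^ 2 + P_out * (2 * ε - 1)) - (1 - ε)) / (2 * ε - 1) < 1 := by
  set D := (1 - ε) ^ 2 + P_out * (2 * ε - 1)
  have hsq := sub_one_sub_sq_lt hP1 hP2 ε
  have hsum : P_out < √D + (1 - ε) := by linarith [Real.lt_sqrt_of_sq_lt hsq]
  have hsum_pos : 0 < √D + (1 - ε) := hP1.trans hsum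
  have hroot : (√D - (1 - ε)) / (2 * ε - 1) = P_out / (√D + (1 - ε)) := by
    refine div_eq_div_add_of_sq_eq ?_ hsum_pos.ne' ?_
    · intro h
      exact hεhalf (by linarith)
    · rw [Real.sq_sqrt ((sq_nonneg _).trans hsq.le)]
      ring
  rw [hroot]
  exact ⟨div_pos hP1 hsum_pos, (div_lt_one hsum_pos).2 hsum⟩

/-- The NNCC per-link cellular outage probability
`P_out^NC = (√((1−ε)² + P_out(2ε−1)) − (1−ε))/(2ε−1)`, with `ε = (1 − P_out)²`,
satisfies `0 < P_out^NC < 1` for `0 < P_out < 1` with `ε ≠ 1/2`. -/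
theorem nncc_outage_in_unit_interval (P_out ε : ℝ) (hP1 : 0 < P_out)
    (hP2 : P_out < 1) (hε : ε = (1 - P_out) ^ 2) (hεhalf : ε ≠ 1 / 2) :
    0 < (Real.sqrt ((1 - ε) ^ 2 + P_out * (2 * ε - 1)) - (1 - ε)) / (2 * ε - 1) ∧
    (Real.sqrt ((1 - ε) ^ 2 + P_out * (2 * ε - 1)) - (1 - ε)) / (2 * ε - 1) < 1 :=
  nncc_outage_in_unit_interval_general P_out ε hP1 hP2 hεhalf
end

section
/- Let r have density 2πρ r e^{−πρ r²} independent of θ uniform on [−π/2, 3π/2]. For p > 2εη r₁², P(P^NC ≤ p) = ∫_{−π/2}^{3π/2} (1 − e^{−πρ R₂(θ)²})/(2π) dθ, where P^NC = (2ζ+εη) r² + 2εη r₁ cos θ · r + 2εη r₁² and R₂(θ) = (−εη r₁ cos θ + √((εη r₁ cos θ)² − (2ζ+εη)(2εη r₁² − p)))/(2ζ + εη). -/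
/-!
Conditioning on `θ`, the power is a quadratic in `r` with positive leading coefficient and
negative value at `r = 0`, so for `r > 0` it is at most `p` exactly when `r ≤ R₂(θ)`, its
positive root. The Rayleigh law of `r` gives this event probability `1 - e^{-πρ R₂(θ)²}`, and
integrating against the uniform law of `θ` yields the formula.
-/

open Real MeasureTheory Set

theorem quadratic_le_iff_le_root {a b c p x : ℝ} (ha : 0 < a) (hcp : c ≤ p) (hx : 0 ≤ x) :
    a * x ^ 2 + 2 * b * x + c ≤ p ↔ x ≤ (-b + √(b ^ 2 - a * (c - p))) / a := by
  set D := b ^ 2 - a * (c - p)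
  have hbD : b ^ 2 ≤ D := by nlinarith
  have hbs : -√D ≤ b := (abs_le.1 (Real.abs_le_sqrt hbD)).1
  have hsq : √D ^ 2 = D := Real.sq_sqrt ((sq_nonneg b).trans hbD)
  -- `(a x + b)² - D = a (a x² + 2 b x + c - p)`
  calc a * x ^ 2 + 2 * b * x + c ≤ p ↔ (a * x + b) ^ 2 ≤ √D ^ 2 := by
        rw [hsq]; constructor <;> intro h <;> nlinarith
    _ ↔ a * x + b ≤ √D := by
        rw [sq_le_sq, abs_of_nonneg (Real.sqrt_nonneg D), abs_le]
        have : -√D ≤ a * x + b := by nlinarith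
        tauto
    _ ↔ x ≤ (-b + √D) / a := by
        rw [le_div_iff₀ ha]; constructor <;> intro h <;> linarith

theorem quadratic_root_pos {a b c p : ℝ} (ha : 0 < a) (hcp : c < p) :
    0 < (-b + √(b ^ 2 - a * (c - p))) / a := by
  have hbs : b < √(b ^ 2 - a * (c - p)) := Real.lt_sqrt_of_sq_lt (by nlinarith)
  exact div_pos (by linarith) ha

theorem setOf_quadratic_le_inter_Ioi {a b c p : ℝ} (ha : 0 < a) (hcp : c ≤ p) :
    {x | a * x ^ 2 + 2 * b * x + c ≤ p} ∩ Ioi 0 = Ioc 0 ((-b + √(b ^ 2 - a * (c - p))) / a) := by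
  ext x
  simp only [mem_inter_iff, mem_ofPred_eq, mem_Ioi, mem_Ioc]
  constructor
  · rintro ⟨hle, hx⟩
    exact ⟨hx, (quadratic_le_iff_le_root ha hcp hx.le).1 hle⟩
  · rintro ⟨hx, hle⟩
    exact ⟨(quadratic_le_iff_le_root ha hcp hx.le).2 hle, hx⟩

theorem withDensity_ofReal_ite {α : Type*} [MeasurableSpace α] {μ : Measure α} {P : α → Prop}
    [DecidablePred P] (hP : MeasurableSet {x | P x}) (f : α → ℝ) :
    μ.withDensity (fun x => ENNReal.ofReal (if P x then f x else 0))
      = (μ.restrict {x | P x}).withDensity fun x => ENNReal.ofReal (f x) := by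
  rw [← withDensity_indicator hP]
  congr with x
  by_cases hx : P x <;> simp [hx]

theorem integral_rayleigh_density (ρ R : ℝ) :
    ∫ x in (0 : ℝ)..R, 2 * π * ρ * x * exp (-(π * ρ * x ^ 2)) = 1 - exp (-(π * ρ * R ^ 2)) := by
  have hderiv : ∀ x, HasDerivAt (fun x => -exp (-(π * ρ * x ^ 2)))
      (2 * π * ρ * x * exp (-(π * ρ * x ^ 2))) x := by
    intro x
    refine (((hasDerivAt_pow 2 x).const_mul (π * ρ)).fun_neg.exp).fun_neg.congr_deriv ?_
    push_cast
    ring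
  rw [intervalIntegral.integral_eq_sub_of_hasDerivAt (fun x _ => hderiv x)
    (by apply Continuous.intervalIntegrable; fun_prop)]
  simp only [ne_eq, OfNat.ofNat_ne_zero, not_false_eq_true, zero_pow, mul_zero, neg_zero,
    exp_zero]
  ring

theorem rayleigh_measure_of_inter_Ioi_eq_Ioc {ρ R : ℝ} (hρ : 0 ≤ ρ) (hR : 0 ≤ R) {s : Set ℝ}
    (hs : MeasurableSet s) (hsR : s ∩ Ioi 0 = Ioc 0 R) :
    (volume.restrict (Ioi 0)).withDensity
        (fun x => ENNReal.ofReal (2 * π * ρ * x * exp (-(π * ρ * x ^ 2)))) s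
      = ENNReal.ofReal (1 - exp (-(π * ρ * R ^ 2))) := by
  rw [withDensity_apply _ hs, Measure.restrict_restrict hs, hsR,
    ← integral_rayleigh_density, intervalIntegral.integral_of_le hR,
    ofReal_integral_eq_lintegral_ofReal]
  · exact Continuous.integrableOn_Ioc (by fun_prop)
  · filter_upwards [ae_restrict_mem measurableSet_Ioc] with x hx
    have : 0 < x := hx.1
    positivity

theorem nncc_power_cdf_general {Ω : Type*} [MeasurableSpace Ω] (μ : Measure Ω)
    (ρ ζ η ε r₁ P_out p : ℝ)
    (hρ : 0 < ρ) (hζ : 0 < ζ) (hη : 0 < η)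
    (hε : ε = 1 + (1 - P_out) ^ 2)
    (X Θ : Ω → ℝ) (hX : Measurable X) (hΘ : Measurable Θ)
    (hlaw : Measure.map (fun ω => (X ω, Θ ω)) μ =
      (volume.withDensity fun r : ℝ =>
          ENNReal.ofReal (if 0 < r then 2 * π * ρ * r * Real.exp (-(π * ρ * r ^ 2)) else 0)).prod
        (volume.withDensity fun θ : ℝ =>
          ENNReal.ofReal (if θ ∈ Set.Icc (-(π / 2)) (3 * π / 2) then 1 / (2 * π) else 0)))
    (hp : p > 2 * ε * η * r₁ ^ 2) :
    (μ {ω | (2 * ζ + ε * η) * (X ω) ^ 2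
        + 2 * ε * η * r₁ * Real.cos (Θ ω) * X ω + 2 * ε * η * r₁ ^ 2 ≤ p}).toReal
      = ∫ θ in Set.Icc (-(π / 2)) (3 * π / 2),
          (1 - Real.exp (-(π * ρ *
            ((-(ε * η * r₁ * Real.cos θ)
              + Real.sqrt ((ε * η * r₁ * Real.cos θ) ^ 2
                - (2 * ζ + ε * η) * (2 * ε * η * r₁ ^ 2 - p)))
             / (2 * ζ + ε * η)) ^ 2))) / (2 * π) := by
  have ha : 0 < 2 * ζ + ε * η := by rw [hε]; positivity
  set S : Set (ℝ × ℝ) := {q | (2 * ζ + ε * η) * q.1 ^ 2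
      + 2 * ε * η * r₁ * cos q.2 * q.1 + 2 * ε * η * r₁ ^ 2 ≤ p}
  have hS : MeasurableSet S := measurableSet_le (by fun_prop) measurable_const
  have hsection : ∀ θ, (volume.restrict {x : ℝ | 0 < x}).withDensity
      (fun x => ENNReal.ofReal (2 * π * ρ * x * exp (-(π * ρ * x ^ 2))))
        ((fun x => (x, θ)) ⁻¹' S) = _ := fun θ =>
    rayleigh_measure_of_inter_Ioi_eq_Ioc hρ.le (quadratic_root_pos ha hp).le
      (hS.preimage measurable_prodMk_right)
      (by
        convert setOf_quadratic_le_inter_Ioi (b := ε * η * r₁ * cos θ) ha hp.le using 2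
        ext x
        show _ ≤ p ↔ _ ≤ p
        ring_nf)
  have hnonneg : ∀ θ, 0 ≤ 1 - exp (-(π * ρ * ((-(ε * η * r₁ * cos θ) + √((ε * η * r₁ * cos θ) ^ 2
      - (2 * ζ + ε * η) * (2 * ε * η * r₁ ^ 2 - p))) / (2 * ζ + ε * η)) ^ 2)) := fun θ =>
    sub_nonneg.2 (exp_le_one_iff.2 (neg_nonpos.2 (by positivity)))
  change (μ ((fun ω => (X ω, Θ ω)) ⁻¹' S)).toReal = _
  rw [← Measure.map_apply (hX.prodMk hΘ) hS, hlaw, withDensity_ofReal_ite measurableSet_Ioi,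
    withDensity_ofReal_ite (P := (· ∈ Icc (-(π / 2)) (3 * π / 2))) measurableSet_Icc,
    ofPred_mem_eq, withDensity_const, Measure.prod_apply_symm hS, lintegral_congr hsection,
    lintegral_smul_measure, smul_eq_mul, ENNReal.toReal_mul,
    ENNReal.toReal_ofReal (by positivity),
    ← integral_eq_lintegral_of_nonneg_ae (.of_forall hnonneg) (by fun_prop), integral_div,
    one_div_mul_eq_div]

/-- CDF of the NNCC power: if `r` has nearest-neighbor density `2πρ r e^{−πρ r²}`
independent of `θ` uniform on `[−π/2, 3π/2]`, then for `p > 2εη r₁²`,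
`P(P^NC ≤ p) = ∫_{−π/2}^{3π/2} (1 − e^{−πρ R₂(θ)²})/(2π) dθ`, where
`P^NC = (2ζ+εη) r² + 2εη r₁ cos θ · r + 2εη r₁²` and
`R₂(θ) = (−εη r₁ cos θ + √((εη r₁ cos θ)² − (2ζ+εη)(2εη r₁² − p)))/(2ζ+εη)`. -/
theorem nncc_power_cdf {Ω : Type*} [MeasurableSpace Ω] (μ : Measure Ω)
    [IsProbabilityMeasure μ] (ρ ζ η ε r₁ P_out p : ℝ)
    (hρ : 0 < ρ) (hζ : 0 < ζ) (hη : 0 < η) (hr₁ : 0 < r₁)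
    (hP1 : 0 < P_out) (hP2 : P_out < 1) (hε : ε = 1 + (1 - P_out) ^ 2)
    (X Θ : Ω → ℝ) (hX : Measurable X) (hΘ : Measurable Θ)
    (hlaw : Measure.map (fun ω => (X ω, Θ ω)) μ =
      (volume.withDensity fun r : ℝ =>
          ENNReal.ofReal (if 0 < r then 2 * π * ρ * r * Real.exp (-(π * ρ * r ^ 2)) else 0)).prod
        (volume.withDensity fun θ : ℝ =>
          ENNReal.ofReal (if θ ∈ Set.Icc (-(π / 2)) (3 * π / 2) then 1 / (2 * π) else 0)))
    (hp : p > 2 * ε * η * r₁ ^ 2) :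
    (μ {ω | (2 * ζ + ε * η) * (X ω) ^ 2
        + 2 * ε * η * r₁ * Real.cos (Θ ω) * X ω + 2 * ε * η * r₁ ^ 2 ≤ p}).toReal
      = ∫ θ in Set.Icc (-(π / 2)) (3 * π / 2),
          (1 - Real.exp (-(π * ρ *
            ((-(ε * η * r₁ * Real.cos θ)
              + Real.sqrt ((ε * η * r₁ * Real.cos θ) ^ 2
                - (2 * ζ + ε * η) * (2 * ε * η * r₁ ^ 2 - p)))
             / (2 * ζ + ε * η)) ^ 2))) / (2 * π) :=
  nncc_power_cdf_general μ ρ ζ η ε r₁ P_out p hρ hζ hη hε X Θ hX hΘ hlaw hp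
end
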